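/- arXiv:2406.16404 — 4 statements merged into one kernel-verified Lean document; each statement's English description precedes it below -/
import Mathlib

section
/- The number of 3-compositions of n, for n ≥ 1, equals 4^(n-1). -/
/-!
Cut a composition of `n` into `n` unit cells. Each of the `n - 1` gaps between consecutive cells
either lies inside a part (`none`) or closes a part, and then records that part's color (`some c`);
the color of the last part is forced. So 3-compositions of `n` correspond to words of length
`n - 1` over `Option (Fin 3)`, an alphabet of size 4.
-/

/-- A 3-composition of `n`: a list of colored parts (part, color), each part positive,
parts summing to `n`, and the last part has the first color `0`. -/
def Is3Composition (n : ℕ) (l : List (ℕ × Fin 3)) : Prop :=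
  (∀ p ∈ l, 0 < p.1) ∧ (l.map Prod.fst).sum = n ∧
    ∀ p, l.getLast? = some p → p.2 = 0

namespace ThreeComposition

def grow : Option (Fin 3) → List (ℕ × Fin 3) → List (ℕ × Fin 3)
  | some c, l => (1, c) :: l
  | none, (p, c) :: l => (p + 1, c) :: l
  | none, [] => [] -- junk value: `decode` never grows the empty list

def decode (w : List (Option (Fin 3))) : List (ℕ × Fin 3) :=
  w.foldr grow [(1, 0)]

def encode : List (ℕ × Fin 3) → List (Option (Fin 3))
  | [] => []
  | [(p, _)] => List.replicate (p - 1) none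
  | (p, c) :: q :: l => List.replicate (p - 1) none ++ some c :: encode (q :: l)

theorem grow_ne_nil (a : Option (Fin 3)) {l : List (ℕ × Fin 3)} (hl : l ≠ []) :
    grow a l ≠ [] := by
  obtain ⟨⟨p, c⟩, l, rfl⟩ := List.exists_cons_of_ne_nil hl
  cases a <;> simp [grow]

theorem is3Composition_grow (a : Option (Fin 3)) {n : ℕ} {l : List (ℕ × Fin 3)}
    (h : Is3Composition n l) (hl : l ≠ []) : Is3Composition (n + 1) (grow a l) := by
  obtain ⟨hpos, hsum, hlast⟩ := h
  obtain ⟨⟨p, c⟩, l, rfl⟩ := List.exists_cons_of_ne_nil hl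
  cases a with
  | some d =>
    refine ⟨?_, ?_, fun q hq => hlast q (by simpa [grow] using hq)⟩
    · simpa [grow] using hpos
    · simp only [grow, List.map_cons, List.sum_cons] at hsum ⊢; omega
  | none =>
    refine ⟨?_, ?_, fun q hq => ?_⟩
    · simp only [grow, List.forall_mem_cons] at hpos ⊢; exact ⟨p.succ_pos, hpos.2⟩
    · simp only [grow, List.map_cons, List.sum_cons] at hsum ⊢; omega
    · cases l with
      | nil => obtain rfl := Option.some.inj hq; exact hlast (p, c) rfl
      | cons => exact hlast q (by simpa [grow] using hq)

theorem decode_ne_nil (w : List (Option (Fin 3))) : decode w ≠ [] := by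
  induction w with
  | nil => simp [decode]
  | cons a w ih => exact grow_ne_nil a ih

theorem is3Composition_decode (w : List (Option (Fin 3))) :
    Is3Composition (w.length + 1) (decode w) := by
  induction w with
  | nil => simp [Is3Composition, decode]
  | cons a w ih => exact is3Composition_grow a ih (decode_ne_nil w)

theorem decode_replicate_none_append (k : ℕ) (w : List (Option (Fin 3))) (p : ℕ) (c : Fin 3)
    (l : List (ℕ × Fin 3)) (h : decode w = (p, c) :: l) :
    decode (List.replicate k none ++ w) = (p + k, c) :: l := by
  induction k with
  | zero => simpa using h
  | succ k ih =>
    simp only [decode, List.replicate_succ, List.cons_append, List.foldr_cons] at ih ⊢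
    rw [ih]; rfl

theorem encode_cons_succ {p : ℕ} (hp : 0 < p) (c : Fin 3) (l : List (ℕ × Fin 3)) :
    encode ((p + 1, c) :: l) = none :: encode ((p, c) :: l) := by
  obtain ⟨p, rfl⟩ := Nat.exists_eq_add_of_lt hp
  cases l <;> simp [encode, List.replicate_succ]

theorem encode_decode (w : List (Option (Fin 3))) : encode (decode w) = w := by
  induction w with
  | nil => rfl
  | cons a w ih =>
    obtain ⟨⟨p, c⟩, l, hw⟩ := List.exists_cons_of_ne_nil (decode_ne_nil w)
    have hdecode : decode (a :: w) = grow a (decode w) := rfl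
    cases a with
    | some d => rw [hdecode, hw, grow, encode, ← hw, ih]; rfl
    | none =>
      have hp : 0 < p := (is3Composition_decode w).1 (p, c) (by simp [hw])
      rw [hdecode, hw, grow, encode_cons_succ hp, ← hw, ih]

theorem decode_encode : ∀ {l : List (ℕ × Fin 3)}, (∀ p ∈ l, 0 < p.1) →
    (∀ q, l.getLast? = some q → q.2 = 0) → l ≠ [] → decode (encode l) = l
  | [], _, _, hl => absurd rfl hl
  | [(p, c)], hpos, hlast, _ => by
    have hp : 0 < p := hpos (p, c) (by simp)
    obtain rfl : c = 0 := hlast (p, c) rfl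
    rw [encode, ← List.append_nil (List.replicate _ _),
      decode_replicate_none_append _ [] 1 0 [] rfl]
    congr; omega
  | (p, c) :: q :: l, hpos, hlast, _ => by
    have hp : 0 < p := hpos (p, c) (by simp)
    have htail : decode (encode (q :: l)) = q :: l :=
      decode_encode (fun r hr => hpos r (by simp [hr]))
        (fun r hr => hlast r (by rwa [List.getLast?_cons_cons])) (List.cons_ne_nil q l)
    rw [encode, decode_replicate_none_append _ _ 1 c (q :: l) (by
      change grow (some c) (decode (encode (q :: l))) = _; rw [htail]; rfl)]
    congr; omega

theorem _root_.Is3Composition.ne_nil {n : ℕ} {l : List (ℕ × Fin 3)} (h : Is3Composition n l)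
    (hn : 1 ≤ n) : l ≠ [] := by
  obtain ⟨-, hsum, -⟩ := h
  rintro rfl
  simp only [List.map_nil, List.sum_nil] at hsum
  omega

theorem length_encode {n : ℕ} {l : List (ℕ × Fin 3)} (h : Is3Composition n l) (hn : 1 ≤ n) :
    (encode l).length = n - 1 := by
  have hsum := (is3Composition_decode (encode l)).2.1
  rw [decode_encode h.1 h.2.2 (h.ne_nil hn), h.2.1] at hsum
  omega

def equivVector {n : ℕ} (hn : 1 ≤ n) :
    {l : List (ℕ × Fin 3) // Is3Composition n l} ≃ List.Vector (Option (Fin 3)) (n - 1) where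
  toFun l := ⟨encode l.1, length_encode l.2 hn⟩
  invFun w := ⟨decode w.1, by simpa [w.2, Nat.sub_add_cancel hn] using is3Composition_decode w.1⟩
  left_inv l := Subtype.ext (decode_encode l.2.1 l.2.2.2 (l.2.ne_nil hn))
  right_inv w := Subtype.ext (encode_decode w.1)

end ThreeComposition

theorem threeCompositions_card (n : ℕ) (hn : 1 ≤ n) :
    Nat.card {l : List (ℕ × Fin 3) // Is3Composition n l} = 4 ^ (n - 1) := by
  rw [Nat.card_congr (ThreeComposition.equivVector hn), Nat.card_eq_fintype_card, card_vector,
    Fintype.card_option, Fintype.card_fin]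
end

section
/- There is a bijection between 3-compositions of n and pairs of compositions of n, for n ≥ 1. -/
/-!
Encode a 3-composition of `n` as a word of length `n` over `{·, 1, 2, 3}`: a part `a` of colour
`c` becomes `a - 1` blank letters followed by `c`, so the word ends in colour 1. Likewise a
composition of `n` is a word of length `n` over `{·, ∣}` ending in `∣`, and a pair of compositions
is a word over `{·, ∣}²` ending in `(∣, ∣)`. The letter bijection `· ↦ (·, ·)`, `1 ↦ (∣, ∣)`,
`2 ↦ (∣, ·)`, `3 ↦ (·, ∣)` matches the two kinds of words. Below, the blank is `none`, `∣` is
`some ()` and colour `k` is `some (k - 1) : Option (Fin 3)`.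
-/

def IsComposition (n : ℕ) (l : List ℕ) : Prop :=
  (∀ x ∈ l, 0 < x) ∧ l.sum = n

open List

section MarkedWord

variable {β : Type*}

def markedWord (l : List (ℕ × β)) : List (Option β) :=
  l.flatMap fun p => replicate (p.1 - 1) none ++ [some p.2]

def bumpHead : List (ℕ × β) → List (ℕ × β)
  | [] => []
  | (a, c) :: l => (a + 1, c) :: l

-- Trailing blanks are dropped, so this inverts `markedWord` only on words ending in a mark.
def ofMarkedWord : List (Option β) → List (ℕ × β)
  | [] => []
  | some c :: w => (1, c) :: ofMarkedWord w
  | none :: w => bumpHead (ofMarkedWord w)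

theorem length_markedWord {l : List (ℕ × β)} (hl : ∀ p ∈ l, 0 < p.1) :
    (markedWord l).length = (l.map Prod.fst).sum := by
  induction l with
  | nil => rfl
  | cons p l ih =>
    have := hl p mem_cons_self
    simp only [markedWord, flatMap_cons, length_append, length_replicate, length_singleton,
      map_cons, sum_cons] at ih ⊢
    rw [ih fun q hq => hl q (mem_cons_of_mem p hq)]
    omega

theorem getLast?_markedWord (l : List (ℕ × β)) :
    (markedWord l).getLast? = l.getLast?.map (some ∘ Prod.snd) := by
  induction l with
  | nil => rfl
  | cons p l ih =>
    rw [markedWord, flatMap_cons, getLast?_append, ← markedWord, ih]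
    rcases h : l.getLast? with _ | q <;> simp [getLast?_cons, h]

theorem ofMarkedWord_replicate_append (k : ℕ) (c : β) (w : List (Option β)) :
    ofMarkedWord (replicate k none ++ some c :: w) = (k + 1, c) :: ofMarkedWord w := by
  induction k with
  | zero => rfl
  | succ k ih => rw [replicate_succ, cons_append, ofMarkedWord, ih, bumpHead]

theorem ofMarkedWord_markedWord {l : List (ℕ × β)} (hl : ∀ p ∈ l, 0 < p.1) :
    ofMarkedWord (markedWord l) = l := by
  induction l with
  | nil => rfl
  | cons p l ih =>
    have := hl p mem_cons_self
    rw [markedWord, flatMap_cons, append_assoc, singleton_append, ← markedWord,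
      ofMarkedWord_replicate_append, ih fun q hq => hl q (mem_cons_of_mem p hq),
      Nat.sub_add_cancel this]

theorem pos_of_mem_ofMarkedWord (w : List (Option β)) : ∀ p ∈ ofMarkedWord w, 0 < p.1 := by
  induction w with
  | nil => simp [ofMarkedWord]
  | cons x w ih =>
    cases x with
    | some c => simpa [ofMarkedWord] using ih
    | none =>
      rw [ofMarkedWord]
      cases h : ofMarkedWord w with
      | nil => simp [bumpHead]
      | cons q l =>
        rw [h, forall_mem_cons] at ih
        rw [bumpHead, forall_mem_cons]
        exact ⟨Nat.succ_pos _, ih.2⟩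

theorem markedWord_bumpHead {l : List (ℕ × β)} (hl : ∀ p ∈ l, 0 < p.1) (hne : l ≠ []) :
    markedWord (bumpHead l) = none :: markedWord l := by
  obtain ⟨⟨a, c⟩, l, rfl⟩ := exists_cons_of_ne_nil hne
  have : 0 < a := hl _ mem_cons_self
  obtain ⟨a, rfl⟩ := Nat.exists_eq_add_of_lt this
  simp [bumpHead, markedWord, replicate_succ]

theorem markedWord_ofMarkedWord {w : List (Option β)} (hw : ∀ x ∈ w.getLast?, x.isSome) :
    markedWord (ofMarkedWord w) = w := by
  induction w with
  | nil => rfl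
  | cons x w ih =>
    have hw' : ∀ x ∈ w.getLast?, x.isSome := fun y hy => hw y (by
      rw [Option.mem_def] at hy ⊢; rw [getLast?_cons, hy]; rfl)
    cases x with
    | some c => rw [ofMarkedWord, markedWord, flatMap_cons, ← markedWord, ih hw']; rfl
    | none =>
      have hne : ofMarkedWord w ≠ [] := by
        intro h
        have hw_nil : w = [] := by rw [← ih hw', h]; rfl
        simp [hw_nil] at hw
      rw [ofMarkedWord, markedWord_bumpHead (pos_of_mem_ofMarkedWord w) hne, ih hw']

end MarkedWord

section Words

variable {α β : Type*}

def IsWordEndingIn (n : ℕ) (a : α) (w : List α) : Prop :=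
  w.length = n ∧ ∀ x ∈ w.getLast?, x = a

theorem IsWordEndingIn.map {n : ℕ} {a : α} {w : List α} (f : α → β) (h : IsWordEndingIn n a w) :
    IsWordEndingIn n (f a) (w.map f) := by
  refine ⟨(length_map f).trans h.1, fun y hy => ?_⟩
  rw [getLast?_map] at hy
  obtain ⟨x, hx, rfl⟩ := Option.mem_map.1 hy
  rw [h.2 x hx]

theorem IsWordEndingIn.zip {n : ℕ} {a : α} {b : β} {u : List α} {v : List β}
    (hu : IsWordEndingIn n a u) (hv : IsWordEndingIn n b v) :
    IsWordEndingIn n (a, b) (u.zip v) := by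
  have hlen : (u.zip v).length = n := by rw [length_zip, hu.1, hv.1, min_self]
  refine ⟨hlen, fun x hx => ?_⟩
  rw [Option.mem_def, getLast?_eq_getElem?, hlen, getElem?_zip_eq_some] at hx
  rw [← hu.2 x.1 (by rw [Option.mem_def, getLast?_eq_getElem?, hu.1]; exact hx.1),
    ← hv.2 x.2 (by rw [Option.mem_def, getLast?_eq_getElem?, hv.1]; exact hx.2)]

def wordEquivOfEquiv (e : α ≃ β) (n : ℕ) (a : α) :
    {w // IsWordEndingIn n a w} ≃ {w // IsWordEndingIn n (e a) w} :=
  (Equiv.listEquivOfEquiv e).subtypeEquiv fun w =>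
    ⟨IsWordEndingIn.map e, fun h => by simpa [Equiv.listEquivOfEquiv] using h.map e.symm⟩

def wordProdEquiv (n : ℕ) (a : α) (b : β) :
    {u // IsWordEndingIn n a u} × {v // IsWordEndingIn n b v} ≃
      {w // IsWordEndingIn n (a, b) w} where
  toFun p := ⟨p.1.1.zip p.2.1, p.1.2.zip p.2.2⟩
  invFun w := (⟨w.1.map Prod.fst, w.2.map Prod.fst⟩, ⟨w.1.map Prod.snd, w.2.map Prod.snd⟩)
  left_inv := fun ⟨⟨u, hu⟩, ⟨v, hv⟩⟩ => by
    have h : u.length = v.length := hu.1.trans hv.1.symm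
    ext1 <;> ext1
    · exact map_fst_zip h.le
    · exact map_snd_zip h.ge
  right_inv w := Subtype.ext <| show (w.1.map _).zip (w.1.map _) = w.1 by
    rw [← unzip_fst, ← unzip_snd, zip_unzip]

end Words

section ColoredComposition

variable {β : Type*}

def IsColoredComposition (n : ℕ) (c : β) (l : List (ℕ × β)) : Prop :=
  (∀ p ∈ l, 0 < p.1) ∧ (l.map Prod.fst).sum = n ∧ ∀ p ∈ l.getLast?, p.2 = c

def coloredCompositionEquivWord (n : ℕ) (c : β) :
    {l // IsColoredComposition n c l} ≃ {w // IsWordEndingIn n (some c) w} where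
  toFun l := ⟨markedWord l.1, by
    obtain ⟨l, hpos, hsum, hlast⟩ := l
    refine ⟨(length_markedWord hpos).trans hsum, fun x hx => ?_⟩
    rw [getLast?_markedWord] at hx
    obtain ⟨p, hp, rfl⟩ := Option.mem_map.1 hx
    rw [Function.comp_apply, hlast p hp]⟩
  invFun w := ⟨ofMarkedWord w.1, by
    obtain ⟨w, hlen, hlast⟩ := w
    have hw : markedWord (ofMarkedWord w) = w :=
      markedWord_ofMarkedWord fun x hx => by rw [hlast x hx]; rfl
    refine ⟨pos_of_mem_ofMarkedWord w, ?_, fun p hp => Option.some_injective _ (hlast _ ?_)⟩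
    · rw [← length_markedWord (pos_of_mem_ofMarkedWord w), hw, hlen]
    · rw [← hw, getLast?_markedWord]
      exact Option.mem_map_of_mem _ hp⟩
  left_inv l := Subtype.ext (ofMarkedWord_markedWord l.2.1)
  right_inv w := Subtype.ext (markedWord_ofMarkedWord fun x hx => by rw [w.2.2 x hx]; rfl)

theorem isComposition_iff_isColoredComposition (n : ℕ) (l : List ℕ) :
    IsComposition n l ↔ IsColoredComposition n () (l.map (·, ())) := by
  simp [IsComposition, IsColoredComposition, Function.comp_def]

def compositionEquivWord (n : ℕ) :
    {l // IsComposition n l} ≃ {w : List (Option Unit) // IsWordEndingIn n (some ()) w} :=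
  ((Equiv.listEquivOfEquiv (Equiv.prodPUnit ℕ).symm).subtypeEquiv
    (isComposition_iff_isColoredComposition n)).trans (coloredCompositionEquivWord n ())

end ColoredComposition

def markEquivMarkPair : Option (Fin 3) ≃ Option Unit × Option Unit where
  toFun
    | none => (none, none)
    | some 0 => (some (), some ())
    | some 1 => (some (), none)
    | some 2 => (none, some ())
  invFun
    | (none, none) => none
    | (some _, some _) => some 0
    | (some _, none) => some 1
    | (none, some _) => some 2
  left_inv := by decide
  right_inv := by decide

theorem threeComps_equiv_pairs_general (n : ℕ) :
    Nonempty ({l : List (ℕ × Fin 3) // Is3Composition n l} ≃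
      {p : List ℕ × List ℕ // IsComposition n p.1 ∧ IsComposition n p.2}) :=
  -- `Is3Composition n` unfolds to `IsColoredComposition n (0 : Fin 3)`.
  ⟨(coloredCompositionEquivWord n 0).trans <|
    (wordEquivOfEquiv markEquivMarkPair n (some 0)).trans <|
    (wordProdEquiv n (some ()) (some ())).symm.trans <|
    ((compositionEquivWord n).prodCongr (compositionEquivWord n)).symm.trans
    Equiv.subtypeProdEquivProd.symm⟩

theorem threeComps_equiv_pairs (n : ℕ) (hn : 1 ≤ n) :
    Nonempty ({l : List (ℕ × Fin 3) // Is3Composition n l} ≃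
      {p : List ℕ × List ℕ // IsComposition n p.1 ∧ IsComposition n p.2}) :=
  threeComps_equiv_pairs_general n
end

section
/- The total number of peaks in all Dyck paths of length 2n, for n ≥ 1, equals C(2n-1, n). -/
def IsStepWord (w : List ℤ) : Prop := ∀ s ∈ w, s = 1 ∨ s = -1

/-- partial sum (height) after `i` steps -/
def psum (w : List ℤ) (i : ℕ) : ℤ := (w.take i).sum

def IsDyckPath (w : List ℤ) : Prop :=
  IsStepWord w ∧ (∀ i, 0 ≤ psum w i) ∧ w.sum = 0

def IsBridge (w : List ℤ) : Prop := IsStepWord w ∧ w.sum = 0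

def IsPeak (w : List ℤ) (i : ℕ) : Prop := w[i]? = some 1 ∧ w[i+1]? = some (-1)

/-- height of the apex of the peak at position `i` -/
def peakHeight (w : List ℤ) (i : ℕ) : ℤ := psum w (i+1)

/-- number of crossings of the x-axis -/
def crossings (w : List ℤ) : ℕ :=
  ((Finset.range w.length).filter
    (fun i => psum w (i+1) = 0 ∧ psum w i * psum w (i+2) < 0)).card

/-!
Deleting the peak `ud` at position `i` of a Dyck path of semilength `m + 1` leaves a Dyck path of
semilength `m`; conversely `ud` may be inserted at any of the `2m + 1` positions of a Dyck path of
semilength `m`, and creates a peak there. Hence the marked peaks are counted by `(2m + 1) C_m`,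
which is `C(2m + 1, m + 1)` since `(m + 1) C_m = C(2m, m)`.
-/

lemma psum_append (a b : List ℤ) (k : ℕ) :
    psum (a ++ b) k = psum a k + psum b (k - a.length) := by
  simp only [psum, List.take_append, List.sum_append]

lemma psum_take (v : List ℤ) (j k : ℕ) : psum (v.take j) k = psum v (min k j) := by
  simp only [psum, List.take_take]

lemma psum_cons_succ (x : ℤ) (l : List ℤ) (k : ℕ) : psum (x :: l) (k + 1) = x + psum l k := by
  simp only [psum, List.take_succ_cons, List.sum_cons]

lemma psum_add (v : List ℤ) (j k : ℕ) : psum v (j + k) = psum v j + psum (v.drop j) k := by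
  simp only [psum, List.take_add, List.sum_append]

section PeakInsertion

def insertPeak (v : List ℤ) (j : ℕ) : List ℤ := v.take j ++ 1 :: -1 :: v.drop j

def removePeak (w : List ℤ) (i : ℕ) : List ℤ := w.take i ++ w.drop (i + 2)

variable {v w : List ℤ} {i j : ℕ}

lemma length_insertPeak (hj : j ≤ v.length) : (insertPeak v j).length = v.length + 2 := by
  simp [insertPeak]; omega

lemma sum_insertPeak (v : List ℤ) (j : ℕ) : (insertPeak v j).sum = v.sum := by
  rw [insertPeak, List.sum_append, List.sum_cons, List.sum_cons, ← List.sum_take_add_sum_drop v j]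
  ring

lemma isPeak_insertPeak (hj : j ≤ v.length) : IsPeak (insertPeak v j) j := by
  constructor <;> simp [insertPeak, hj]

lemma psum_insertPeak_of_le (hj : j ≤ v.length) {k : ℕ} (hk : k ≤ j) :
    psum (insertPeak v j) k = psum v k := by
  rw [insertPeak, psum_append, psum_take, min_eq_left hk, List.length_take_of_le hj,
    Nat.sub_eq_zero_of_le hk]
  exact add_zero _

lemma psum_insertPeak_succ (hj : j ≤ v.length) :
    psum (insertPeak v j) (j + 1) = psum v j + 1 := by
  rw [insertPeak, psum_append, psum_take, List.length_take_of_le hj, Nat.add_sub_cancel_left,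
    min_eq_right (Nat.le_succ j), psum_cons_succ]
  simp [psum]

lemma psum_insertPeak_add (hj : j ≤ v.length) (k : ℕ) :
    psum (insertPeak v j) (j + 2 + k) = psum v (j + k) := by
  rw [insertPeak, psum_append, psum_take, List.length_take_of_le hj, min_eq_right (by omega),
    show j + 2 + k - j = k + 1 + 1 by omega, psum_cons_succ, psum_cons_succ, psum_add]
  ring

lemma isDyckPath_insertPeak (hv : IsDyckPath v) (hj : j ≤ v.length) :
    IsDyckPath (insertPeak v j) := by
  obtain ⟨hstep, hheight, hsum⟩ := hv
  refine ⟨fun s hs => ?_, fun k => ?_, by rw [sum_insertPeak, hsum]⟩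
  · simp only [insertPeak, List.mem_append, List.mem_cons] at hs
    rcases hs with h | h | h | h
    · exact hstep s (List.take_subset _ _ h)
    · exact Or.inl h
    · exact Or.inr h
    · exact hstep s (List.drop_subset _ _ h)
  · rcases Nat.lt_or_ge k (j + 2) with hk | hk
    · rcases Nat.lt_or_ge k (j + 1) with hk' | hk'
      · rw [psum_insertPeak_of_le hj (by omega)]; exact hheight k
      · rw [show k = j + 1 by omega, psum_insertPeak_succ hj]; linarith [hheight j]
    · obtain ⟨k, rfl⟩ := Nat.exists_eq_add_of_le hk
      rw [psum_insertPeak_add hj]; exact hheight _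

lemma removePeak_insertPeak (hj : j ≤ v.length) : removePeak (insertPeak v j) j = v := by
  have hlen : (v.take j).length = j := List.length_take_of_le hj
  have hsplit : insertPeak v j = (v.take j ++ [1, -1]) ++ v.drop j := by simp [insertPeak]
  rw [removePeak, hsplit, List.take_append_of_le_length (by simp [hlen]),
    List.take_append_of_le_length hlen.ge, List.take_of_length_le hlen.le,
    List.drop_left' (by simp [hlen]), List.take_append_drop]

lemma IsPeak.lt_length (hw : IsPeak w i) : i + 1 < w.length :=
  (List.getElem?_eq_some_iff.mp hw.2).1

lemma insertPeak_removePeak (hw : IsPeak w i) : insertPeak (removePeak w i) i = w := by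
  obtain ⟨hi, hw₁⟩ := List.getElem?_eq_some_iff.mp hw.1
  obtain ⟨hi', hw₂⟩ := List.getElem?_eq_some_iff.mp hw.2
  have hdrop : w.drop i = 1 :: -1 :: w.drop (i + 2) := by
    rw [List.drop_eq_getElem_cons hi, hw₁, List.drop_eq_getElem_cons hi', hw₂]
  have hlen : (w.take i).length = i := List.length_take_of_le hi.le
  rw [insertPeak, removePeak, List.take_append_of_le_length hlen.ge,
    List.take_of_length_le hlen.le, List.drop_left' hlen, ← hdrop, List.take_append_drop]

lemma length_removePeak (hw : IsPeak w i) : (removePeak w i).length = w.length - 2 := by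
  have := hw.lt_length
  simp [removePeak]; omega

lemma isDyckPath_removePeak (hw : IsDyckPath w) (hpeak : IsPeak w i) :
    IsDyckPath (removePeak w i) := by
  have hi : i ≤ (removePeak w i).length := by
    rw [length_removePeak hpeak]; have := hpeak.lt_length; omega
  have hw' := insertPeak_removePeak hpeak
  obtain ⟨hstep, hheight, hsum⟩ := hw
  refine ⟨fun s hs => ?_, fun k => ?_, by rw [← sum_insertPeak, hw', hsum]⟩
  · rcases List.mem_append.mp hs with h | h
    · exact hstep s (List.take_subset _ _ h)
    · exact hstep s (List.drop_subset _ _ h)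
  · rcases Nat.le_total k i with hk | hk
    · rw [← psum_insertPeak_of_le hi hk, hw']; exact hheight k
    · obtain ⟨k, rfl⟩ := Nat.exists_eq_add_of_le hk
      rw [← psum_insertPeak_add hi, hw']; exact hheight _

end PeakInsertion

def markedPeakEquiv (m : ℕ) :
    {p : List ℤ × ℕ // IsDyckPath p.1 ∧ p.1.length = 2 * (m + 1) ∧ IsPeak p.1 p.2} ≃
      {v : List ℤ // IsDyckPath v ∧ v.length = 2 * m} × Fin (2 * m + 1) where
  toFun p :=
    have hi := p.2.2.2.lt_length
    (⟨removePeak p.1.1 p.1.2, isDyckPath_removePeak p.2.1 p.2.2.2, by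
      rw [length_removePeak p.2.2.2, p.2.2.1]; omega⟩, ⟨p.1.2, by omega⟩)
  invFun q :=
    have hj : (q.2 : ℕ) ≤ q.1.1.length := by rw [q.1.2.2]; omega
    ⟨(insertPeak q.1.1 q.2, q.2), isDyckPath_insertPeak q.1.2.1 hj, by
      rw [length_insertPeak hj, q.1.2.2]; ring, isPeak_insertPeak hj⟩
  left_inv p := Subtype.ext (Prod.ext (insertPeak_removePeak p.2.2.2) rfl)
  right_inv q := by
    have hj : (q.2 : ℕ) ≤ q.1.1.length := by rw [q.1.2.2]; omega
    exact Prod.ext (Subtype.ext (removePeak_insertPeak hj)) rfl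

section DyckWords

open DyckStep

def DyckStep.toInt : DyckStep → ℤ
  | U => 1
  | D => -1

lemma DyckStep.toInt_injective : Function.Injective DyckStep.toInt := by
  intro a b h
  cases a <;> cases b <;> simp_all [DyckStep.toInt]

lemma sum_map_toInt (l : List DyckStep) :
    (l.map DyckStep.toInt).sum = (l.count U : ℤ) - l.count D := by
  induction l with
  | nil => simp
  | cons x l ih => cases x <;> simp [DyckStep.toInt, ih] <;> ring

lemma exists_map_toInt_eq {w : List ℤ} (hw : IsStepWord w) :
    ∃ l : List DyckStep, l.map DyckStep.toInt = w := by
  induction w with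
  | nil => exact ⟨[], rfl⟩
  | cons x w ih =>
    obtain ⟨l, rfl⟩ := ih fun s hs => hw s (List.mem_cons_of_mem x hs)
    rcases hw x List.mem_cons_self with rfl | rfl
    exacts [⟨U :: l, rfl⟩, ⟨D :: l, rfl⟩]

lemma isDyckPath_map_toInt_iff (l : List DyckStep) :
    IsDyckPath (l.map DyckStep.toInt) ↔
      l.count U = l.count D ∧ ∀ i, (l.take i).count D ≤ (l.take i).count U := by
  have hstep : IsStepWord (l.map DyckStep.toInt) := by
    simp only [IsStepWord, List.mem_map]
    rintro s ⟨x, -, rfl⟩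
    cases x <;> simp [DyckStep.toInt]
  have hpsum (k : ℕ) :
      psum (l.map DyckStep.toInt) k = ((l.take k).count U : ℤ) - (l.take k).count D := by
    rw [psum, ← List.map_take, sum_map_toInt]
  simp only [IsDyckPath, hstep, hpsum, sum_map_toInt, true_and, sub_nonneg, sub_eq_zero,
    Nat.cast_le, Nat.cast_inj]
  exact and_comm

def DyckWord.toIntList (p : DyckWord) : List ℤ := p.toList.map DyckStep.toInt

lemma DyckWord.length_toIntList (p : DyckWord) : p.toIntList.length = 2 * p.semilength := by
  rw [DyckWord.toIntList, List.length_map, p.two_mul_semilength_eq_length]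

lemma isDyckPath_iff_exists_dyckWord {w : List ℤ} :
    IsDyckPath w ↔ ∃ p : DyckWord, p.toIntList = w := by
  constructor
  · intro hw
    obtain ⟨l, rfl⟩ := exists_map_toInt_eq hw.1
    obtain ⟨hcount, hprefix⟩ := (isDyckPath_map_toInt_iff l).mp hw
    exact ⟨⟨l, hcount, hprefix⟩, rfl⟩
  · rintro ⟨p, rfl⟩
    exact (isDyckPath_map_toInt_iff p.toList).mpr ⟨p.count_U_eq_count_D, p.count_D_le_count_U⟩

lemma card_dyckPaths (m : ℕ) :
    Nat.card {w : List ℤ // IsDyckPath w ∧ w.length = 2 * m} = catalan m := by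
  rw [← DyckWord.card_dyckWord_semilength_eq_catalan, ← Nat.card_eq_fintype_card]
  refine (Nat.card_congr (Equiv.ofBijective (fun p => ⟨p.1.toIntList,
    isDyckPath_iff_exists_dyckWord.mpr ⟨p.1, rfl⟩, by rw [p.1.length_toIntList, p.2]⟩)
    ⟨?_, ?_⟩)).symm
  · intro p q h
    exact Subtype.ext (DyckWord.ext (List.map_injective_iff.mpr DyckStep.toInt_injective
      (congrArg Subtype.val h)))
  · rintro ⟨w, hw, hlen⟩
    obtain ⟨p, rfl⟩ := isDyckPath_iff_exists_dyckWord.mp hw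
    exact ⟨⟨p, by rw [p.length_toIntList] at hlen; omega⟩, rfl⟩

end DyckWords

lemma catalan_mul_two_mul_add_one (m : ℕ) :
    catalan m * (2 * m + 1) = (2 * m + 1).choose (m + 1) := by
  refine Nat.eq_of_mul_eq_mul_right m.succ_pos ?_
  calc catalan m * (2 * m + 1) * (m + 1)
      = (2 * m + 1) * ((m + 1) * catalan m) := by ring
    _ = (2 * m + 1) * (2 * m).choose m := by rw [succ_mul_catalan_eq_centralBinom]; rfl
    _ = (2 * m + 1).choose (m + 1) * (m + 1) := Nat.add_one_mul_choose_eq _ _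

theorem total_peaks_card (n : ℕ) (hn : 1 ≤ n) :
    Nat.card {p : List ℤ × ℕ //
        IsDyckPath p.1 ∧ p.1.length = 2 * n ∧ IsPeak p.1 p.2} =
      (2 * n - 1).choose n := by
  obtain ⟨m, rfl⟩ := Nat.exists_eq_add_of_le' hn
  rw [Nat.card_congr (markedPeakEquiv m), Nat.card_prod, card_dyckPaths, Nat.card_fin,
    catalan_mul_two_mul_add_one, show 2 * (m + 1) - 1 = 2 * m + 1 by omega]
end

section
/- For every fixed r ≥ 1 and every n > r, the number D_r(n) of Dyck paths of semi-length n that have exactly r peaks at every reached height is divisible by r + 1. -/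
/-- number of peaks of  23:39:17 up 5 min,  0 user,  load average: 0.00, 0.00, 0.00
USER     TTY      FROM             LOGIN@   IDLE   JCPU   PCPU WHAT at height  -/
def peaksAt (w : List ℤ) (k : ℤ) : ℕ :=
  ((Finset.range w.length).filter
    (fun i => w[i]? = some 1 ∧ w[i+1]? = some (-1) ∧ psum w (i+1) = k)).card

open Finset

theorem Setoid.dvd_natCard_of_natCard_rel_eq {α : Type*} [Finite α] (s : Setoid α) {m : ℕ}
    (h : ∀ a, Nat.card {b // s a b} = m) : m ∣ Nat.card α := by
  have := Fintype.ofFinite (Quotient s)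
  rw [← Nat.card_congr (Equiv.sigmaFiberEquiv (Quotient.mk s)), Nat.card_sigma]
  refine Finset.dvd_sum fun q _ => ?_
  induction q using Quotient.inductionOn with
  | h a =>
    rw [← h a]
    refine (Nat.card_congr (Equiv.subtypeEquivRight fun b => ?_)).dvd
    rw [Quotient.eq]
    exact ⟨s.symm, s.symm⟩

theorem addOrderOf_dvd_card_of_add_mem {G : Type*} [AddGroup G] [Finite G] {T : Finset G}
    {g : G} (hT : ∀ x ∈ T, x + g ∈ T) : addOrderOf g ∣ T.card := by
  have hmem : ∀ x ∈ T, ∀ h ∈ AddSubgroup.zmultiples g, x + h ∈ T := by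
    intro x hx h hh
    obtain ⟨j, rfl⟩ := mem_multiples_iff_mem_zmultiples.2 hh
    clear hh
    induction j with
    | zero => simpa using hx
    | succ j ih => simpa [succ_nsmul, ← add_assoc] using hT _ ih
  rw [← Nat.card_eq_finsetCard, ← Nat.card_zmultiples]
  -- the classes of `T` modulo `zmultiples g` are full cosets
  refine (Setoid.comap Subtype.val
    (QuotientAddGroup.leftRel (AddSubgroup.zmultiples g))).dvd_natCard_of_natCard_rel_eq
    fun x => Nat.card_congr
      { toFun := fun y => ⟨-x.1 + y.1, QuotientAddGroup.leftRel_apply.1 y.2⟩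
        invFun := fun h =>
          ⟨⟨x + h, hmem x x.2 h h.2⟩, QuotientAddGroup.leftRel_apply.2 (by simp)⟩
        left_inv := fun y => by ext; simp
        right_inv := fun h => by ext; simp }

@[simp] lemma psum_zero (w : List ℤ) : psum w 0 = 0 := rfl

@[simp] lemma psum_cons_succ_s15 (a : ℤ) (w : List ℤ) (i : ℕ) :
    psum (a :: w) (i + 1) = a + psum w i := by
  simp [psum]

lemma psum_succ_of_getElem? {w : List ℤ} {i : ℕ} {a : ℤ} (h : w[i]? = some a) :
    psum w (i + 1) = psum w i + a := by
  simp [psum, List.take_add_one, h]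

lemma psum_of_length_le {w : List ℤ} {i : ℕ} (h : w.length ≤ i) : psum w i = w.sum := by
  rw [psum, List.take_of_length_le h]

lemma psum_add_s15 (w : List ℤ) (t j : ℕ) : psum w (t + j) = psum w t + psum (w.drop t) j := by
  simp only [psum, List.take_add, List.sum_append]

lemma psum_take_s15 (w : List ℤ) {t j : ℕ} (h : j ≤ t) : psum (w.take t) j = psum w j := by
  rw [psum, List.take_take, min_eq_left h, psum]

lemma psum_rotate {w : List ℤ} {t j : ℕ} (ht : t ≤ w.length) (hj : j ≤ w.length) :
    psum (w.rotate t) j = psum w (t + j) - psum w t + psum w (j - (w.length - t)) := by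
  rw [List.rotate_eq_drop_append_take ht, psum, List.take_append, List.sum_append, ← psum,
    ← psum, List.length_drop, psum_take_s15 w (by omega), psum_add_s15 w t j]
  ring

lemma psum_rotate_of_psum_eq_zero {w : List ℤ} {t j : ℕ} (hw : w.sum = 0) (ht : t ≤ w.length)
    (h0 : psum w t = 0) (hj : j < w.length) :
    psum (w.rotate t) j = psum w ((t + j) % w.length) := by
  rw [psum_rotate ht hj.le, h0]
  rcases lt_or_ge (t + j) w.length with h | h
  · rw [Nat.mod_eq_of_lt h, Nat.sub_eq_zero_of_le (by omega), psum_zero]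
    ring
  · rw [psum_of_length_le h, hw, Nat.mod_eq_sub_mod h, Nat.mod_eq_of_lt (by omega),
      show j - (w.length - t) = t + j - w.length by omega]
    ring

lemma peaksAt_cons (a : ℤ) (w : List ℤ) (k : ℤ) :
    peaksAt (a :: w) k =
      peaksAt w (k - a) + if a = 1 ∧ w[0]? = some (-1) ∧ k = 1 then 1 else 0 := by
  classical
  simp only [peaksAt, card_filter, List.length_cons, sum_range_succ', List.getElem?_cons_succ,
    List.getElem?_cons_zero, psum_cons_succ_s15, psum_zero, add_zero, Option.some.injEq,
    eq_sub_iff_add_eq']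
  congr 2
  apply propext
  constructor <;> rintro ⟨rfl, h, rfl⟩ <;> exact ⟨rfl, h, rfl⟩

lemma peaksAt_cons_cons {w : List ℤ} (hw : w[0]? ≠ some (-1)) (k : ℤ) :
    peaksAt (1 :: -1 :: w) k = peaksAt w k + if k = 1 then 1 else 0 := by
  simp [peaksAt_cons, hw]

def Reaches (w : List ℤ) (k : ℤ) : Prop := ∃ i, psum w i = k

open Classical in
noncomputable def peakPositions (w : List ℤ) (k : ℤ) : Finset ℕ :=
  (range w.length).filter fun i => IsPeak w i ∧ peakHeight w i = k

lemma mem_peakPositions {w : List ℤ} {k : ℤ} {i : ℕ} :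
    i ∈ peakPositions w k ↔ i < w.length ∧ IsPeak w i ∧ peakHeight w i = k := by
  simp [peakPositions]

lemma card_peakPositions (w : List ℤ) (k : ℤ) : (peakPositions w k).card = peaksAt w k := by
  unfold peaksAt
  congr 1
  ext i
  simp [mem_peakPositions, IsPeak, peakHeight, and_assoc]

lemma List.rotate_rotate_length_sub {α : Type*} (l : List α) {t : ℕ} (ht : t ≤ l.length) :
    (l.rotate t).rotate (l.length - t) = l := by
  rw [List.rotate_rotate, Nat.add_sub_cancel' ht, List.rotate_length]

lemma eq_cons_cons_of_isPeak_zero {w : List ℤ} (h : IsPeak w 0) : w = 1 :: -1 :: w.drop 2 := by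
  match w, h with
  | a :: b :: l, ⟨ha, hb⟩ => simp_all

namespace IsDyckPath

variable {u : List ℤ}

lemma getElem?_zero_ne (hu : IsDyckPath u) : u[0]? ≠ some (-1) := fun h => by
  have := hu.2.1 1
  rw [psum_succ_of_getElem? h, psum_zero] at this
  omega

lemma getElem?_length_sub_one_ne (hu : IsDyckPath u) : u[u.length - 1]? ≠ some 1 := fun h => by
  have hL : u.length - 1 + 1 = u.length := by
    have := (List.getElem?_eq_some_iff.1 h).1
    omega
  have := psum_succ_of_getElem? h
  rw [hL, psum_of_length_le le_rfl, hu.2.2] at this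
  have := hu.2.1 (u.length - 1)
  omega

lemma reaches_one (hu : IsDyckPath u) (hne : u ≠ []) : Reaches u 1 := by
  obtain ⟨a, l, rfl⟩ := List.exists_cons_of_ne_nil hne
  refine ⟨1, ?_⟩
  rcases hu.1 a (by simp) with rfl | rfl
  · simp
  · exact absurd rfl hu.getElem?_zero_ne

lemma rotate {t : ℕ} (hu : IsDyckPath u) (ht : t ≤ u.length) (h0 : psum u t = 0) :
    IsDyckPath (u.rotate t) := by
  have hsum : (u.rotate t).sum = 0 := (List.rotate_perm u t).sum_eq.trans hu.2.2
  refine ⟨fun s hs => hu.1 s (List.mem_rotate.1 hs), fun j => ?_, hsum⟩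
  rcases lt_or_ge j u.length with hj | hj
  · rw [psum_rotate_of_psum_eq_zero hu.2.2 ht h0 hj]
    exact hu.2.1 _
  · rw [psum_of_length_le (by simpa using hj), hsum]

lemma psum_eq_zero_of_rotate {t : ℕ} (hu : IsDyckPath u) (hrot : IsDyckPath (u.rotate t))
    (ht : t ≤ u.length) : psum u t = 0 := by
  have h := hrot.2.1 (u.length - t)
  rw [psum_rotate ht (Nat.sub_le _ _), Nat.add_sub_cancel' ht, psum_of_length_le le_rfl, hu.2.2,
    Nat.sub_self, psum_zero] at h
  linarith [hu.2.1 t]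

lemma reaches_of_reaches_rotate {t : ℕ} {k : ℤ} (hu : IsDyckPath u) (ht : t ≤ u.length)
    (h0 : psum u t = 0) (hk : Reaches (u.rotate t) k) : Reaches u k := by
  obtain ⟨j, rfl⟩ := hk
  rcases lt_or_ge j u.length with hj | hj
  · exact ⟨_, (psum_rotate_of_psum_eq_zero hu.2.2 ht h0 hj).symm⟩
  · exact ⟨0, by rw [psum_zero, psum_of_length_le (w := u.rotate t) (by simpa using hj),
      (hu.rotate ht h0).2.2]⟩

lemma isPeak_rotate {t i : ℕ} (hu : IsDyckPath u) (ht : t ≤ u.length) (h0 : psum u t = 0)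
    (hi : IsPeak (u.rotate t) i) :
    IsPeak u ((i + t) % u.length) ∧
      peakHeight u ((i + t) % u.length) = peakHeight (u.rotate t) i := by
  obtain ⟨h1, h2⟩ := hi
  have hi1 : i + 1 < u.length := by simpa using (List.getElem?_eq_some_iff.1 h2).1
  rw [List.getElem?_rotate (by omega)] at h1
  rw [List.getElem?_rotate hi1] at h2
  have hm : (i + t) % u.length < u.length := Nat.mod_lt _ (by omega)
  have hlast : (i + t) % u.length ≠ u.length - 1 := fun h =>
    hu.getElem?_length_sub_one_ne (h ▸ h1)
  -- the peak does not wrap around, because a Dyck path ends with a down step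
  have hsucc : (i + 1 + t) % u.length = (i + t) % u.length + 1 := by
    have := Nat.div_add_mod (i + t) u.length
    generalize (i + t) % u.length = m at *
    generalize (i + t) / u.length = q at *
    rw [show i + 1 + t = m + 1 + u.length * q by omega, Nat.add_mul_mod_self_left,
      Nat.mod_eq_of_lt (by omega)]
  refine ⟨⟨h1, hsucc ▸ h2⟩, ?_⟩
  rw [peakHeight, peakHeight, psum_rotate_of_psum_eq_zero hu.2.2 ht h0 (by simpa using hi1),
    ← hsucc, add_comm t]

lemma peaksAt_rotate_le {t : ℕ} (hu : IsDyckPath u) (ht : t ≤ u.length) (h0 : psum u t = 0)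
    (k : ℤ) : peaksAt (u.rotate t) k ≤ peaksAt u k := by
  rw [← card_peakPositions, ← card_peakPositions]
  refine card_le_card_of_injOn (fun i => (i + t) % u.length) (fun i hi => ?_)
    (fun i hi j hj hij => ?_)
  · obtain ⟨hiL, hpeak, rfl⟩ := mem_peakPositions.1 hi
    obtain ⟨hpeak', hheight⟩ := hu.isPeak_rotate ht h0 hpeak
    exact mem_peakPositions.2 ⟨Nat.mod_lt _ (by simp at hiL; omega), hpeak', hheight⟩
  · have hiL := (mem_peakPositions.1 hi).1
    have hjL := (mem_peakPositions.1 hj).1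
    simp only [List.length_rotate] at hiL hjL
    have := Nat.ModEq.add_right_cancel' t hij
    rwa [Nat.ModEq, Nat.mod_eq_of_lt hiL, Nat.mod_eq_of_lt hjL] at this

lemma peaksAt_rotate {t : ℕ} (hu : IsDyckPath u) (ht : t ≤ u.length) (h0 : psum u t = 0)
    (k : ℤ) : peaksAt (u.rotate t) k = peaksAt u k := by
  have hrot := hu.rotate ht h0
  have hback := u.rotate_rotate_length_sub ht
  refine (hu.peaksAt_rotate_le ht h0 k).antisymm ?_
  have h := hrot.peaksAt_rotate_le (t := u.length - t) (by simp)
    (hrot.psum_eq_zero_of_rotate (by rwa [hback]) (by simp)) k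
  rwa [hback] at h

lemma mem_peakPositions_one_iff {t : ℕ} (hu : IsDyckPath u)
    (ht : t < u.length) :
    t ∈ peakPositions u 1 ↔ IsDyckPath (u.rotate t) ∧ IsPeak (u.rotate t) 0 := by
  constructor
  · intro h
    obtain ⟨-, hpeak, hheight⟩ := mem_peakPositions.1 h
    have h0 : psum u t = 0 := by
      rw [peakHeight, psum_succ_of_getElem? hpeak.1] at hheight
      omega
    have hrot := hu.rotate ht.le h0
    have hback := u.rotate_rotate_length_sub ht.le
    have h := hrot.isPeak_rotate (t := u.length - t) (by simp)
      (hrot.psum_eq_zero_of_rotate (by rwa [hback]) (by simp)) (i := t) (by rwa [hback])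
    rw [List.length_rotate, Nat.add_sub_cancel' ht.le, Nat.mod_self] at h
    exact ⟨hrot, h.1⟩
  · rintro ⟨hrot, hpeak⟩
    obtain ⟨hpeak', hheight⟩ :=
      hu.isPeak_rotate ht.le (hu.psum_eq_zero_of_rotate hrot ht.le) hpeak
    rw [zero_add, Nat.mod_eq_of_lt ht] at hpeak' hheight
    refine mem_peakPositions.2 ⟨ht, hpeak', ?_⟩
    rw [hheight, peakHeight, psum_succ_of_getElem? hpeak.1, psum_zero, zero_add]

lemma addOrderOf_dvd_peaksAt {d : ℕ} (hu : IsDyckPath u) (hd : d < u.length)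
    (hrot : u.rotate d = u) (k : ℤ) : addOrderOf (d : ZMod u.length) ∣ peaksAt u k := by
  have h0 := hu.psum_eq_zero_of_rotate (by rwa [hrot]) hd.le
  have : NeZero u.length := ⟨by omega⟩
  rw [← card_peakPositions, ← card_image_of_injOn (f := ((↑) : ℕ → ZMod u.length))]
  · refine addOrderOf_dvd_card_of_add_mem fun x hx => ?_
    obtain ⟨i, hi, rfl⟩ := mem_image.1 hx
    obtain ⟨-, hpeak, rfl⟩ := mem_peakPositions.1 hi
    obtain ⟨hpeak', hheight⟩ := hu.isPeak_rotate hd.le h0 (hrot.symm ▸ hpeak)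
    refine mem_image.2 ⟨(i + d) % u.length, mem_peakPositions.2 ⟨Nat.mod_lt _ (by omega),
      hpeak', by rw [hheight, hrot]⟩, by simp⟩
  · intro i hi j hj hij
    have hiL := (mem_peakPositions.1 hi).1
    have hjL := (mem_peakPositions.1 hj).1
    rwa [ZMod.natCast_eq_natCast_iff', Nat.mod_eq_of_lt hiL, Nat.mod_eq_of_lt hjL] at hij

lemma rotate_ne_self {d : ℕ} (hu : IsDyckPath u) (h12 : peaksAt u 1 = peaksAt u 2 + 1)
    (hd0 : 0 < d) (hd : d < u.length) : u.rotate d ≠ u := fun hrot => by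
  have h := Nat.dvd_sub (hu.addOrderOf_dvd_peaksAt hd hrot 1) (hu.addOrderOf_dvd_peaksAt hd hrot 2)
  rw [h12, Nat.add_sub_cancel_left, Nat.dvd_one, AddMonoid.addOrderOf_eq_one_iff,
    ZMod.natCast_eq_zero_iff] at h
  exact absurd (Nat.le_of_dvd hd0 h) (by omega)

lemma rotate_injOn (hu : IsDyckPath u) (h12 : peaksAt u 1 = peaksAt u 2 + 1) :
    Set.InjOn u.rotate (Set.Iio u.length) := by
  suffices ∀ t₁ t₂, t₁ < t₂ → t₂ < u.length → u.rotate t₁ ≠ u.rotate t₂ by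
    intro t₁ ht₁ t₂ ht₂ h
    rcases lt_trichotomy t₁ t₂ with hlt | heq | hgt
    · exact absurd h (this t₁ t₂ hlt ht₂)
    · exact heq
    · exact absurd h.symm (this t₂ t₁ hgt ht₁)
  intro t₁ t₂ hlt ht₂ h
  refine hu.rotate_ne_self h12 (d := t₁ + (u.length - t₂)) (by omega) (by omega) ?_
  rw [← List.rotate_rotate, h, u.rotate_rotate_length_sub ht₂.le]

end IsDyckPath

lemma isDyckPath_cons_cons_iff {w : List ℤ} : IsDyckPath (1 :: -1 :: w) ↔ IsDyckPath w := by
  have hpsum : (∀ i, 0 ≤ psum (1 :: -1 :: w) i) ↔ ∀ i, 0 ≤ psum w i :=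
    ⟨fun h i => by simpa using h (i + 2), fun h i => by
      rcases i with _ | _ | i <;> simp [h]⟩
  simp only [IsDyckPath, IsStepWord, List.mem_cons, forall_eq_or_imp, List.sum_cons, hpsum]
  norm_num

lemma reaches_cons_cons {w : List ℤ} {k : ℤ} (h : Reaches w k) : Reaches (1 :: -1 :: w) k :=
  let ⟨i, hi⟩ := h
  ⟨i + 2, by simpa using hi⟩

lemma reaches_of_reaches_cons_cons {w : List ℤ} {k : ℤ} (hw : Reaches w 1) (hk : 1 ≤ k)
    (h : Reaches (1 :: -1 :: w) k) : Reaches w k := by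
  obtain ⟨_ | _ | i, hi⟩ := h
  · rw [psum_zero] at hi
    omega
  · exact (show k = 1 by simpa using hi.symm) ▸ hw
  · exact ⟨i, by simpa using hi⟩

lemma IsDyckPath.two_mul_peaksAt_one {w : List ℤ} (hw : IsDyckPath w) (h2 : ¬ Reaches w 2) :
    2 * peaksAt w 1 = w.length := by
  match w, hw, h2 with
  | [], _, _ => rfl
  | [a], hw, _ => rcases hw.1 a (by simp) with rfl | rfl <;> simp [IsDyckPath] at hw
  | a :: b :: l, hw, h2 =>
    obtain rfl : a = 1 :=
      (hw.1 a (by simp)).resolve_right fun h => hw.getElem?_zero_ne (by simp [h])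
    obtain rfl : b = -1 := (hw.1 b (by simp)).resolve_left fun h => h2 ⟨2, by simp [h]⟩
    have hl := isDyckPath_cons_cons_iff.1 hw
    have := hl.two_mul_peaksAt_one fun h => h2 (reaches_cons_cons h)
    rw [peaksAt_cons_cons hl.getElem?_zero_ne, if_pos rfl, List.length_cons, List.length_cons]
    omega

def HasUniformPeaks (r : ℕ) (w : List ℤ) : Prop :=
  ∀ k : ℤ, 1 ≤ k → Reaches w k → peaksAt w k = r

lemma HasUniformPeaks.of_rotate {r t : ℕ} {w w' : List ℤ} (hw : IsDyckPath w) (hne : w ≠ [])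
    (hpk : HasUniformPeaks r w) (hw' : IsDyckPath w') (ht : t ≤ w.length + 2)
    (hrot : (1 :: -1 :: w).rotate t = 1 :: -1 :: w') : HasUniformPeaks r w' := by
  intro k hk hreach
  have hu := isDyckPath_cons_cons_iff.2 hw
  have h0 := hu.psum_eq_zero_of_rotate (by rwa [hrot, isDyckPath_cons_cons_iff]) ht
  have hpeaks := hu.peaksAt_rotate ht h0 k
  rw [hrot, peaksAt_cons_cons hw'.getElem?_zero_ne, peaksAt_cons_cons hw.getElem?_zero_ne,
    Nat.add_right_cancel_iff] at hpeaks
  rw [hpeaks]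
  refine hpk k hk (reaches_of_reaches_cons_cons (hw.reaches_one hne) hk
    (hu.reaches_of_reaches_rotate ht h0 ?_))
  rw [hrot]
  exact reaches_cons_cons hreach

-- The paths counted by `D_r(n)`.
abbrev UniformDyckPath (n r : ℕ) : Type :=
  {w : List ℤ // IsDyckPath w ∧ w.length = 2 * n ∧ HasUniformPeaks r w}

namespace UniformDyckPath

variable {n r : ℕ}

instance : Finite (UniformDyckPath n r) := by
  let S : Set ℤ := {1, -1}
  refine Set.Finite.to_subtype (((List.finite_length_eq S (2 * n)).image
    (List.map Subtype.val)).subset fun w hw => ?_)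
  have hS : ∀ s ∈ w, s ∈ S := hw.1.1
  exact ⟨w.attachWith (· ∈ S) hS, by simpa using hw.2.1, List.attachWith_map_subtype_val hS⟩

lemma ne_nil (hrn : r < n) (w : UniformDyckPath n r) : w.1 ≠ [] := by
  intro h
  have := w.2.2.1
  rw [h, List.length_nil] at this
  omega

lemma reaches_two (hrn : r < n) (w : UniformDyckPath n r) : Reaches w.1 2 := by
  by_contra h
  have := w.2.1.two_mul_peaksAt_one h
  rw [w.2.2.2 1 le_rfl (w.2.1.reaches_one (w.ne_nil hrn)), w.2.2.1] at this
  omega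

lemma peaksAt_cons_cons_one_two (hrn : r < n) (w : UniformDyckPath n r) :
    peaksAt (1 :: -1 :: w.1) 1 = r + 1 ∧ peaksAt (1 :: -1 :: w.1) 2 = r := by
  rw [peaksAt_cons_cons w.2.1.getElem?_zero_ne, peaksAt_cons_cons w.2.1.getElem?_zero_ne,
    w.2.2.2 1 le_rfl (w.2.1.reaches_one (w.ne_nil hrn)),
    w.2.2.2 2 (by norm_num) (w.reaches_two hrn)]
  simp

def rotationSetoid (n r : ℕ) : Setoid (UniformDyckPath n r) :=
  (List.IsRotated.setoid ℤ).comap fun w => 1 :: -1 :: w.1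

lemma exists_rotate_eq (hrn : r < n) (w : UniformDyckPath n r) {t : ℕ}
    (ht : t ∈ peakPositions (1 :: -1 :: w.1) 1) :
    ∃ w' : UniformDyckPath n r, (1 :: -1 :: w.1).rotate t = 1 :: -1 :: w'.1 := by
  have hu := isDyckPath_cons_cons_iff.2 w.2.1
  have htL := (mem_peakPositions.1 ht).1
  obtain ⟨hrot, hpeak⟩ := (hu.mem_peakPositions_one_iff htL).1 ht
  have heq := eq_cons_cons_of_isPeak_zero hpeak
  rw [heq, isDyckPath_cons_cons_iff] at hrot
  exact ⟨⟨_, hrot, by simp [w.2.2.1],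
    w.2.2.2.of_rotate w.2.1 (w.ne_nil hrn) hrot (by simpa using htL.le) heq⟩, heq⟩

theorem natCard_rotationSetoid_rel (hrn : r < n) (w : UniformDyckPath n r) :
    Nat.card {w' // rotationSetoid n r w w'} = r + 1 := by
  set u := 1 :: -1 :: w.1
  have hu : IsDyckPath u := isDyckPath_cons_cons_iff.2 w.2.1
  obtain ⟨h1, h2⟩ := w.peaksAt_cons_cons_one_two hrn
  choose f hf using fun t : peakPositions u 1 => w.exists_rotate_eq hrn t.2
  rw [← h1, ← card_peakPositions, ← Nat.card_eq_finsetCard]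
  refine (Nat.card_eq_of_bijective (fun t => ⟨f t, t, hf t⟩)
    ⟨fun t₁ t₂ h => ?_, ?_⟩).symm
  · have hrot : u.rotate t₁ = u.rotate t₂ := by
      rw [hf, hf, show f t₁ = f t₂ from congrArg Subtype.val h]
    exact Subtype.ext (hu.rotate_injOn (by rw [h1, h2]) (mem_peakPositions.1 t₁.2).1
      (mem_peakPositions.1 t₂.2).1 hrot)
  · rintro ⟨w', t, ht⟩
    rw [← List.rotate_mod] at ht
    have hmem : t % u.length ∈ peakPositions u 1 := by
      refine (hu.mem_peakPositions_one_iff (Nat.mod_lt _ (Nat.succ_pos _))).2 ⟨?_, ?_⟩ <;>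
        rw [ht]
      · exact isDyckPath_cons_cons_iff.2 w'.2.1
      · simp [IsPeak]
    have h := (hf ⟨_, hmem⟩).symm.trans ht
    simp only [List.cons.injEq, true_and] at h
    exact ⟨⟨_, hmem⟩, Subtype.ext (Subtype.ext h)⟩

end UniformDyckPath

theorem Dr_divisible_general (r n : ℕ) (hn : r < n) :
    (r + 1) ∣ Nat.card {w : List ℤ //
        IsDyckPath w ∧ w.length = 2 * n ∧
          ∀ k : ℤ, 1 ≤ k → (∃ i, psum w i = k) → peaksAt w k = r} :=
  (UniformDyckPath.rotationSetoid n r).dvd_natCard_of_natCard_rel_eq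
    (UniformDyckPath.natCard_rotationSetoid_rel hn)

theorem Dr_divisible (r n : ℕ) (hr : 1 ≤ r) (hn : r < n) :
    (r + 1) ∣ Nat.card {w : List ℤ //
        IsDyckPath w ∧ w.length = 2 * n ∧
          ∀ k : ℤ, 1 ≤ k → (∃ i, psum w i = k) → peaksAt w k = r} :=
  Dr_divisible_general r n hn
end
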